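/- arXiv:1307.7106 — 3 statements merged into one kernel-verified Lean document; each statement's English description precedes it below -/
import Mathlib

section
/- Assume the cominuscule condition: every positive root has coefficient of α_t at most 1 in its expansion in the simple roots. If β, β′ ∈ Δ(𝔲₊) are radical roots such that ⟨β, α_j^∨⟩ = ⟨β′, α_j^∨⟩ for every simple coroot α_j^∨ with j ≠ t, then β = β′. (This is the combinatorial form of the statement that the weight spaces of the 𝔨-modules 𝔲_± are one-dimensional, 𝔨 being the semisimple part of the Levi factor.) -/
open scoped RealInnerProductSpace

namespace Stmt3

variable {V : Type*} [NormedAddCommGroup V] [InnerProductSpace ℝ V] [FiniteDimensional ℝ V]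

/-- The reflection `v ↦ v - (2⟪v,β⟫/⟪β,β⟫) β` as a linear map. -/
noncomputable def reflMap (β : V) : V →ₗ[ℝ] V where
  toFun v := v - (2 * ⟪v, β⟫ / ⟪β, β⟫) • β
  map_add' v w := by
    simp only [inner_add_left, mul_add, add_div, add_smul]
    abel
  map_smul' c v := by
    simp only [real_inner_smul_left, RingHom.id_apply, smul_sub, smul_smul]
    congr 1
    ring

lemma reflMap_involutive (β : V) (v : V) : reflMap β (reflMap β v) = v := by
  by_cases hQ : ⟪β, β⟫ = 0
  · simp only [reflMap, LinearMap.coe_mk, AddHom.coe_mk, hQ, div_zero, mul_zero, zero_smul, sub_zero]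
  · simp only [reflMap, LinearMap.coe_mk, AddHom.coe_mk, inner_sub_left, real_inner_smul_left]
    have h : 2 * (⟪v, β⟫ - 2 * ⟪v, β⟫ / ⟪β, β⟫ * ⟪β, β⟫) / ⟪β, β⟫
        = -(2 * ⟪v, β⟫ / ⟪β, β⟫) := by
      field_simp
      ring
    rw [h, neg_smul, sub_neg_eq_add, sub_add_cancel]

/-- The reflection in the vector `β` as a linear automorphism of `V`. -/
noncomputable def sβ (β : V) : V ≃ₗ[ℝ] V :=
  LinearEquiv.ofLinear (reflMap β) (reflMap β)
    (LinearMap.ext fun v => reflMap_involutive β v)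
    (LinearMap.ext fun v => reflMap_involutive β v)

variable (Δ : Set V) {r : ℕ} (α : Fin r → V)

/-- The set of positive roots: roots that are nonnegative linear combinations of the
simple roots `α`. -/
def Pos : Set V :=
  {β ∈ Δ | ∃ c : Fin r → ℝ, (∀ i, 0 ≤ c i) ∧ β = ∑ i, c i • α i}

/-- The radical roots `Δ(𝔲₊)`: positive roots not in the span of the simple roots
other than `α t`. -/
def Radical (t : Fin r) : Set V :=
  {β ∈ Pos Δ α | β ∉ Submodule.span ℝ (α '' {j | j ≠ t})}

/-- The Weyl group: the subgroup of `GL(V)` generated by the simple reflections. -/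
noncomputable def Weyl : Subgroup (V ≃ₗ[ℝ] V) :=
  Subgroup.closure (Set.range fun i => sβ (α i))

/-- The parabolic subgroup `W_𝔩` of the Weyl group, generated by the simple
reflections `s_j` for `j ≠ t`. -/
noncomputable def WeylL (t : Fin r) : Subgroup (V ≃ₗ[ℝ] V) :=
  Subgroup.closure ((fun i => sβ (α i)) '' {j | j ≠ t})

/-- The axioms of a reduced irreducible crystallographic root system `Δ` with base
(system of simple roots) `α : Fin r → V`. -/
structure IsRootSystem : Prop where
  finite : Δ.Finite
  ne_zero : ∀ β ∈ Δ, β ≠ 0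
  simple_mem : ∀ i, α i ∈ Δ
  indep : LinearIndependent ℝ α
  spans : Submodule.span ℝ Δ = ⊤
  reduced : ∀ β ∈ Δ, ∀ c : ℝ, c • β ∈ Δ → c = 1 ∨ c = -1
  crystallographic : ∀ β ∈ Δ, ∀ γ ∈ Δ, ∃ n : ℤ, 2 * ⟪β, γ⟫ / ⟪γ, γ⟫ = (n : ℝ)
  reflect_mem : ∀ β ∈ Δ, ∀ γ ∈ Δ, sβ γ β ∈ Δ
  pos_neg : ∀ β ∈ Δ, β ∈ Pos Δ α ∨ -β ∈ Pos Δ α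
  irreducible : ∀ S T : Set V, S ∪ T = Δ →
    (∀ β ∈ S, ∀ γ ∈ T, ⟪β, γ⟫ = 0) → S = ∅ ∨ T = ∅

lemma sβ_apply (γ v : V) : sβ γ v = v - (2 * ⟪v, γ⟫ / ⟪γ, γ⟫) • γ := rfl

lemma inner_self_pos' {x : V} (hx : x ≠ 0) : 0 < ⟪x, x⟫ :=
  lt_of_le_of_ne real_inner_self_nonneg
    (fun hq => hx ((@inner_self_eq_zero ℝ _ _ _ _ x).mp hq.symm))

lemma coords_unique {α : Fin r → V} (hind : LinearIndependent ℝ α) {c c' : Fin r → ℝ}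
    (hcc : ∑ i, c i • α i = ∑ i, c' i • α i) : ∀ i, c i = c' i := by
  intro i
  have hz : ∑ i, (c i - c' i) • α i = 0 := by
    simp only [sub_smul, Finset.sum_sub_distrib, hcc, sub_self]
  have := Fintype.linearIndependent_iff.mp hind (fun i => c i - c' i) hz i
  linarith

lemma mem_span_aux {α : Fin r → V} (t : Fin r) {c : Fin r → ℝ} (hct : c t = 0) :
    (∑ i, c i • α i) ∈ Submodule.span ℝ (α '' {j | j ≠ t}) := by
  apply Submodule.sum_mem
  intro i _
  by_cases hi : i = t
  · subst hi; simp [hct]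
  · exact Submodule.smul_mem _ _ (Submodule.subset_span ⟨i, hi, rfl⟩)

lemma inner_sum_coord {α : Fin r → V} (t : Fin r) {δ : V}
    (horth : ∀ j, j ≠ t → ⟪δ, α j⟫ = 0) (c : Fin r → ℝ) :
    ⟪δ, ∑ i, c i • α i⟫ = c t * ⟪δ, α t⟫ := by
  rw [inner_sum, Finset.sum_eq_single t]
  · rw [real_inner_smul_right]
  · intro j _ hj; rw [real_inner_smul_right, horth j hj, mul_zero]
  · intro habs; exact absurd (Finset.mem_univ t) habs

lemma aux_false {Δ : Set V} {α : Fin r → V}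
    (h : IsRootSystem Δ α) (t : Fin r)
    (hcom : ∀ β ∈ Pos Δ α, ∀ c : Fin r → ℝ, β = ∑ i, c i • α i → c t ≤ 1)
    {β β' : V} (hβ : β ∈ Radical Δ α t) (hβ' : β' ∈ Radical Δ α t)
    (horth : ∀ j, j ≠ t → ⟪β - β', α j⟫ = 0)
    {c c' : Fin r → ℝ} (hc0 : ∀ i, 0 ≤ c i) (hc'0 : ∀ i, 0 ≤ c' i)
    (hcs : β = ∑ i, c i • α i) (hc's : β' = ∑ i, c' i • α i)
    (hlt : c' t < c t) : False := by
  have hβΔ : β ∈ Δ := hβ.1.1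
  have hβ'Δ : β' ∈ Δ := hβ'.1.1
  have hδcoords : β - β' = ∑ i, (c i - c' i) • α i := by
    rw [hcs, hc's]
    simp only [sub_smul, Finset.sum_sub_distrib]
  have hδne : β - β' ≠ 0 := by
    intro h0
    have hbb : β = β' := sub_eq_zero.mp h0
    have := coords_unique h.indep (hcs.symm.trans (hbb.trans hc's)) t
    linarith
  have hQδ : 0 < ⟪β - β', β - β'⟫ := inner_self_pos' hδne
  have hδβ : ⟪β - β', β⟫ = c t * ⟪β - β', α t⟫ := by
    have h1 := inner_sum_coord t horth c
    rwa [← hcs] at h1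
  have hδβ' : ⟪β - β', β'⟫ = c' t * ⟪β - β', α t⟫ := by
    have h1 := inner_sum_coord t horth c'
    rwa [← hc's] at h1
  have hδδ : ⟪β - β', β - β'⟫ = (c t - c' t) * ⟪β - β', α t⟫ := by
    rw [inner_sub_right, hδβ, hδβ']; ring_nf
  have hαt : 0 < ⟪β - β', α t⟫ := by
    rcases le_or_gt ⟪β - β', α t⟫ 0 with hle | hlt2
    · nlinarith
    · exact hlt2
  have hct1 : c t ≤ 1 := hcom β hβ.1 c hcs
  have hc't : 0 < c' t := by
    rcases (hc'0 t).lt_or_eq with hlt2 | heq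
    · exact hlt2
    · exact absurd (hc's ▸ mem_span_aux t heq.symm) hβ'.2
  have hct0 : 0 < c t := lt_trans hc't hlt
  have hsub1 : ⟪β, β⟫ - ⟪β', β⟫ = c t * ⟪β - β', α t⟫ := by
    rw [← inner_sub_left]; exact hδβ
  have hsub2 : ⟪β, β'⟫ - ⟪β', β'⟫ = c' t * ⟪β - β', α t⟫ := by
    rw [← inner_sub_left]; exact hδβ'
  have hA : 0 < ⟪β, β⟫ := inner_self_pos' (h.ne_zero β hβΔ)
  have hB : 0 < ⟪β', β'⟫ := inner_self_pos' (h.ne_zero β' hβ'Δ)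
  have hcomm : ⟪β, β'⟫ = ⟪β', β⟫ := real_inner_comm _ _
  have hP : 0 < ⟪β', β⟫ := by nlinarith [mul_nonneg (hc'0 t) hαt.le]
  have hPA : ⟪β', β⟫ < ⟪β, β⟫ := by nlinarith [mul_pos hct0 hαt]
  -- the crystallographic integer 2⟪β',β⟫/⟪β,β⟫ lies in (0,2), so it is 1
  obtain ⟨n, hn⟩ := h.crystallographic β' hβ'Δ β hβΔ
  have hn0 : (0:ℤ) < n := by
    have : (0:ℝ) < (n:ℝ) := by rw [← hn]; positivity
    exact_mod_cast this
  have hn2 : (n:ℤ) < 2 := by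
    have : (n:ℝ) < 2 := by
      rw [← hn, div_lt_iff₀ hA]; nlinarith
    exact_mod_cast this
  have hn1 : n = 1 := by omega
  have hratio : 2 * ⟪β', β⟫ / ⟪β, β⟫ = 1 := by rw [hn, hn1]; norm_num
  -- hence β' - β is a root, and so is β - β'
  have hnegδ : -(β - β') ∈ Δ := by
    have := h.reflect_mem β' hβ'Δ β hβΔ
    rw [sβ_apply, hratio, one_smul] at this
    rwa [neg_sub]
  have hδΔ : β - β' ∈ Δ := by
    have hmem := h.reflect_mem _ hnegδ _ hnegδ
    rw [sβ_apply] at hmem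
    have hq : ⟪-(β - β'), -(β - β')⟫ ≠ 0 := by
      rw [inner_neg_neg]; exact hQδ.ne'
    rw [mul_div_assoc, div_self hq, mul_one] at hmem
    have heq : -(β - β') - (2:ℝ) • -(β - β') = β - β' := by
      rw [smul_neg, sub_neg_eq_add, two_smul]; abel
    rwa [heq] at hmem
  -- β - β' is a positive root
  have hδpos : ∀ i, 0 ≤ c i - c' i := by
    rcases h.pos_neg _ hδΔ with hpos | hneg
    · obtain ⟨_, g, hg0, hgsum⟩ := hpos
      intro i
      have := coords_unique h.indep (hgsum.symm.trans hδcoords) i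
      rw [← this]; exact hg0 i
    · obtain ⟨_, g, hg0, hgsum⟩ := hneg
      exfalso
      have hns : -(β - β') = ∑ i, (c' i - c i) • α i := by
        rw [hδcoords, ← Finset.sum_neg_distrib]
        congr 1; funext i; rw [← neg_smul]; ring_nf
      have := coords_unique h.indep (hgsum.symm.trans hns) t
      have := hg0 t
      linarith
  -- reflect β - β' in α t
  obtain ⟨m, hm⟩ := h.crystallographic (β - β') hδΔ (α t) (h.simple_mem t)
  have hQt : 0 < ⟪α t, α t⟫ := inner_self_pos' (h.ne_zero _ (h.simple_mem t))
  have hm0 : (0:ℤ) < m := by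
    have : (0:ℝ) < (m:ℝ) := by rw [← hm]; positivity
    exact_mod_cast this
  have hm1 : (1:ℝ) ≤ (m:ℝ) := by exact_mod_cast hm0
  have hεΔ : (β - β') - (m:ℝ) • α t ∈ Δ := by
    have := h.reflect_mem _ hδΔ _ (h.simple_mem t)
    rwa [sβ_apply, hm] at this
  have hεcoords : (β - β') - (m:ℝ) • α t
      = ∑ i, ((c i - c' i) - (if i = t then (m:ℝ) else 0)) • α i := by
    rw [hδcoords]
    simp only [sub_smul, Finset.sum_sub_distrib, ite_smul, zero_smul,
      Finset.sum_ite_eq', Finset.mem_univ, if_true]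
  have hkey : ∀ j, j ≠ t → c j = c' j := by
    rcases h.pos_neg _ hεΔ with hpos | hneg
    · exfalso
      obtain ⟨_, g, hg0, hgsum⟩ := hpos
      have hgt := coords_unique h.indep (hgsum.symm.trans hεcoords) t
      rw [if_pos rfl] at hgt
      nlinarith [hg0 t]
    · obtain ⟨_, g, hg0, hgsum⟩ := hneg
      have hns : -((β - β') - (m:ℝ) • α t)
          = ∑ i, ((c' i - c i) + (if i = t then (m:ℝ) else 0)) • α i := by
        rw [hεcoords, ← Finset.sum_neg_distrib]
        congr 1; funext i; rw [← neg_smul]; ring_nf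
      intro j hj
      have heq := coords_unique h.indep (hgsum.symm.trans hns) j
      have := hg0 j
      rw [heq, if_neg hj] at this
      have := hδpos j
      linarith
  -- conclude β - β' = (c t - c' t) • α t, contradicting reducedness
  have hfin : β - β' = (c t - c' t) • α t := by
    rw [hδcoords, Finset.sum_eq_single t]
    · intro j _ hj; rw [hkey j hj, sub_self, zero_smul]
    · intro habs; exact absurd (Finset.mem_univ t) habs
  rcases h.reduced (α t) (h.simple_mem t) (c t - c' t) (hfin ▸ hδΔ) with h1 | h1
  · linarith
  · linarith

/-- Assume the cominuscule condition: every positive root has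
coefficient of `α t` at most `1` in its expansion in the simple roots.  If `β, β'` are
radical roots with `⟨β, α_j^∨⟩ = ⟨β', α_j^∨⟩` for every simple coroot `α_j^∨` with
`j ≠ t`, then `β = β'`.  (The weight spaces of the `𝔨`-modules `𝔲_±` are
one-dimensional.) -/
theorem radical_root_determined_by_levi_weights
    (h : IsRootSystem Δ α) (t : Fin r)
    (hcom : ∀ β ∈ Pos Δ α, ∀ c : Fin r → ℝ, β = ∑ i, c i • α i → c t ≤ 1)
    (β β' : V) (hβ : β ∈ Radical Δ α t) (hβ' : β' ∈ Radical Δ α t)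
    (hpair : ∀ j : Fin r, j ≠ t →
      2 * ⟪β, α j⟫ / ⟪α j, α j⟫ = 2 * ⟪β', α j⟫ / ⟪α j, α j⟫) :
    β = β' := by
  by_contra hne
  obtain ⟨⟨hβΔ, c, hc0, hcs⟩, hβsp⟩ := id hβ
  obtain ⟨⟨hβ'Δ, c', hc'0, hc's⟩, hβ'sp⟩ := id hβ'
  have horth : ∀ j, j ≠ t → ⟪β - β', α j⟫ = 0 := by
    intro j hj
    have hQ : ⟪α j, α j⟫ ≠ 0 :=
      (inner_self_pos' (h.ne_zero _ (h.simple_mem j))).ne'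
    have hp := hpair j hj
    rw [div_eq_div_iff hQ hQ] at hp
    have h2 : 2 * ⟪β, α j⟫ = 2 * ⟪β', α j⟫ := mul_right_cancel₀ hQ hp
    rw [inner_sub_left]; linarith
  have horth' : ∀ j, j ≠ t → ⟪β' - β, α j⟫ = 0 := by
    intro j hj
    have := horth j hj
    rw [inner_sub_left] at this ⊢
    linarith
  rcases lt_trichotomy (c' t) (c t) with hlt | heq | hgt
  · exact aux_false h t hcom hβ hβ' horth hc0 hc'0 hcs hc's hlt
  · -- c t = c' t forces β = β'
    have hδδ : ⟪β - β', β - β'⟫ = (c t - c' t) * ⟪β - β', α t⟫ := by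
      rw [inner_sub_right]
      have h1 := inner_sum_coord t horth c
      have h2 := inner_sum_coord t horth c'
      rw [← hcs] at h1
      rw [← hc's] at h2
      rw [h1, h2]; ring_nf
    have hδne : β - β' ≠ 0 := sub_ne_zero.mpr hne
    have := inner_self_pos' hδne
    rw [hδδ, heq] at this
    simp at this
  · exact aux_false h t hcom hβ' hβ horth' hc'0 hc0 hc's hcs hgt

end Stmt3
end

section
/- Let k be a field, N ≥ 0, and let A = ⨁_{n=0}^N A_n and B = ⨁_{n=0}^N B_n be finite-dimensional ℕ-graded unital associative k-algebras with A_0 = k·1_A, B_0 = k·1_B, and one-dimensional top components A_N and B_N. Suppose given, for each 0 ≤ n ≤ N, a nondegenerate bilinear pairing ⟨·,·⟩ : B_n × A_n → k, extended to a pairing B × A → k by declaring components of different degrees orthogonal. Assume that for A the projection onto the top component is a Frobenius functional, i.e. the A_N-valued bilinear form sending (a, b) ∈ A × A to the degree-N component of ab is nondegenerate, and assume the analogous condition for B. Let γ₊ : A → End_k(A) be the left regular representation, γ₊(x)z = xz, and let γ₋ : B → End_k(A) be the unique (automatically multiplicative) linear map satisfying ⟨w, γ₋(y)x⟩ = ⟨wy,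 x⟩ for all w, y ∈ B and x ∈ A. Then the linear map γ : B ⊗_k A → End_k(A), y ⊗ x ↦ γ₋(y) ∘ γ₊(x), is a linear isomorphism. -/
/-!
Statement 9: the factorization of the quantum Clifford algebra.  For graded algebras
`A`, `B` in perfect graded duality, both Frobenius via projection onto the top degree,
the map `γ : B ⊗ A → End(A)`, `y ⊗ x ↦ γ₋(y) ∘ γ₊(x)` (annihilation times creation)
is a linear isomorphism.
-/

open scoped TensorProduct

namespace Stmt9

/-- If `u ∈ M ⊗ S` and all contractions of `u` against a family of functionals that
separates points of `S` vanish, then `u = 0`. -/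
lemma tensor_eq_zero_of_contractions (k : Type*) [Field k] (M P : Type*)
    [AddCommGroup M] [Module k M] [AddCommGroup P] [Module k P]
    (S : Submodule k P) (u : M ⊗[k] P)
    (hu : u ∈ LinearMap.range (LinearMap.lTensor M S.subtype))
    (fs : Set (P →ₗ[k] k))
    (hsep : ∀ p ∈ S, (∀ f ∈ fs, f p = 0) → p = 0)
    (hvan : ∀ f ∈ fs,
      ((TensorProduct.rid k M).toLinearMap ∘ₗ LinearMap.lTensor M f) u = 0) :
    u = 0 := by
  classical
  let b : Module.Basis (Module.Basis.ofVectorSpaceIndex k M) k M := Module.Basis.ofVectorSpace k M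
  let Φ : M ⊗[k] P ≃ₗ[k] (Module.Basis.ofVectorSpaceIndex k M →₀ P) :=
    (TensorProduct.congr b.repr (LinearEquiv.refl k P)).trans
      (TensorProduct.finsuppScalarLeft k P _)
  have key : ∀ (f : P →ₗ[k] k) (i : Module.Basis.ofVectorSpaceIndex k M) (v : M ⊗[k] P),
      f (Φ v i) = b.repr (((TensorProduct.rid k M).toLinearMap ∘ₗ
        LinearMap.lTensor M f) v) i := by
    intro f i
    suffices h : (f ∘ₗ (Finsupp.lapply i) ∘ₗ Φ.toLinearMap)
        = (Finsupp.lapply i) ∘ₗ (b.repr : M ≃ₗ[k] _).toLinearMap ∘ₗ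
          (TensorProduct.rid k M).toLinearMap ∘ₗ LinearMap.lTensor M f by
      intro v
      exact DFunLike.congr_fun h v
    apply TensorProduct.ext'
    intro m p
    simp [Φ, b, TensorProduct.congr_tmul, mul_comm]
  have hmem0 : ∀ (w : M ⊗[k] S) (i), Φ (LinearMap.lTensor M S.subtype w) i ∈ S := by
    intro w i
    induction w using TensorProduct.induction_on with
    | zero => simp
    | tmul m q =>
        have : Φ (LinearMap.lTensor M S.subtype (m ⊗ₜ q)) i = b.repr m i • (q : P) := by
          simp [Φ, TensorProduct.congr_tmul]
        rw [this]
        exact S.smul_mem _ q.2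
    | add v w hv hw => rw [map_add, map_add, Finsupp.add_apply]; exact S.add_mem hv hw
  have hmem : ∀ i, Φ u i ∈ S := by
    obtain ⟨w, rfl⟩ := hu
    exact fun i => hmem0 w i
  have hz : ∀ i, Φ u i = 0 := by
    intro i
    refine hsep _ (hmem i) ?_
    intro f hf
    rw [key f i u, hvan f hf]
    simp
  have : Φ u = 0 := Finsupp.ext hz
  simpa using congrArg Φ.symm this


/-- The factorization map `γ : B ⊗ A → End_k(A)`, `y ⊗ x ↦ γ₋(y) ∘ γ₊(x)`, where
`γ₊(x)` is left multiplication by `x` and `γ₋ = γm` is given. -/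
noncomputable def gammaMap (k : Type*) [Field k] (A B : Type*) [Ring A] [Algebra k A]
    [Ring B] [Algebra k B] (γm : B →ₗ[k] (A →ₗ[k] A)) :
    B ⊗[k] A →ₗ[k] (A →ₗ[k] A) :=
  TensorProduct.lift <| LinearMap.mk₂ k
    (fun y x => γm y ∘ₗ LinearMap.mul k A x)
    (fun y y' x => by simp only [map_add, LinearMap.add_comp])
    (fun cc y x => by simp only [map_smul, LinearMap.smul_comp])
    (fun y x x' => by simp only [map_add, LinearMap.comp_add])
    (fun cc y x => by simp only [map_smul, LinearMap.comp_smul])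

set_option maxHeartbeats 1000000 in
/-- Let `A = ⨁_{n≤N} A_n` and `B = ⨁_{n≤N} B_n` be
finite-dimensional graded algebras with `A_0 = k·1`, `B_0 = k·1` and one-dimensional
top components, in nondegenerate degree-wise duality via `pair`, and suppose that for
both `A` and `B` projection onto the top component (`πA`, `πB`) is a Frobenius
functional.  Let `γ₊` be the left regular representation of `A` and let `γ₋ = γm` be
the representation of `B` determined by `⟨w, γ₋(y)x⟩ = ⟨wy, x⟩`.  Then
`γ : B ⊗ A → End_k(A)`, `y ⊗ x ↦ γ₋(y) ∘ γ₊(x)`, is a linear isomorphism. -/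
theorem gamma_bijective
    (k : Type*) [Field k] (N : ℕ)
    (A : Type*) [Ring A] [Algebra k A] [FiniteDimensional k A]
    (B : Type*) [Ring B] [Algebra k B] [FiniteDimensional k B]
    (𝒜 : ℕ → Submodule k A) (ℬ : ℕ → Submodule k B)
    -- gradings
    (hAinternal : DirectSum.IsInternal 𝒜) (hBinternal : DirectSum.IsInternal ℬ)
    (hA0 : 𝒜 0 = Submodule.span k {(1 : A)}) (hB0 : ℬ 0 = Submodule.span k {(1 : B)})
    (hAmul : ∀ m n : ℕ, ∀ a ∈ 𝒜 m, ∀ b ∈ 𝒜 n, a * b ∈ 𝒜 (m + n))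
    (hBmul : ∀ m n : ℕ, ∀ a ∈ ℬ m, ∀ b ∈ ℬ n, a * b ∈ ℬ (m + n))
    (hAtop : Module.finrank k (𝒜 N) = 1) (hBtop : Module.finrank k (ℬ N) = 1)
    (hAbound : ∀ n : ℕ, N < n → 𝒜 n = ⊥) (hBbound : ∀ n : ℕ, N < n → ℬ n = ⊥)
    -- the nondegenerate degree-wise pairing of B with A
    (pair : B →ₗ[k] A →ₗ[k] k)
    (horth : ∀ m n : ℕ, m ≠ n → ∀ b ∈ ℬ m, ∀ a ∈ 𝒜 n, pair b a = 0)
    (hndA : ∀ n : ℕ, ∀ a ∈ 𝒜 n, a ≠ 0 → ∃ b ∈ ℬ n, pair b a ≠ 0)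
    (hndB : ∀ n : ℕ, ∀ b ∈ ℬ n, b ≠ 0 → ∃ a ∈ 𝒜 n, pair b a ≠ 0)
    -- projections onto the top components
    (πA : A →ₗ[k] A) (hπA1 : ∀ a ∈ 𝒜 N, πA a = a)
    (hπA0 : ∀ n : ℕ, n ≠ N → ∀ a ∈ 𝒜 n, πA a = 0)
    (πB : B →ₗ[k] B) (hπB1 : ∀ b ∈ ℬ N, πB b = b)
    (hπB0 : ∀ n : ℕ, n ≠ N → ∀ b ∈ ℬ n, πB b = 0)
    -- projection onto the top component is a Frobenius functional for A and for B
    (hFrobA : (∀ a : A, a ≠ 0 → ∃ b, πA (a * b) ≠ 0) ∧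
      (∀ b : A, b ≠ 0 → ∃ a, πA (a * b) ≠ 0))
    (hFrobB : (∀ a : B, a ≠ 0 → ∃ b, πB (a * b) ≠ 0) ∧
      (∀ b : B, b ≠ 0 → ∃ a, πB (a * b) ≠ 0))
    -- the annihilation representation γ₋ = γm of B on A
    (γm : B →ₗ[k] (A →ₗ[k] A))
    (hγm : ∀ (w y : B) (x : A), pair w (γm y x) = pair (w * y) x) :
    Function.Bijective (gammaMap k A B γm) := by
  classical
  -- ## projections for A
  let eA : (DirectSum ℕ fun n => 𝒜 n) ≃ₗ[k] A :=
    LinearEquiv.ofBijective (DirectSum.coeLinearMap 𝒜) hAinternal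
  let pA' : (n : ℕ) → (A →ₗ[k] 𝒜 n) := fun n =>
    (DirectSum.component k ℕ (fun n => 𝒜 n) n) ∘ₗ eA.symm.toLinearMap
  let pA : ℕ → (A →ₗ[k] A) := fun n => (𝒜 n).subtype ∘ₗ pA' n
  have hpA'_apply : ∀ n a, pA' n a = eA.symm a n := fun n a => rfl
  have hpA_mem : ∀ n a, pA n a ∈ 𝒜 n := fun n a => (pA' n a).2
  have hpA_same : ∀ n, ∀ a ∈ 𝒜 n, pA n a = a := by
    intro n a ha
    have h := hAinternal.ofBijective_coeLinearMap_of_mem ha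
    have : pA' n a = ⟨a, ha⟩ := by rw [hpA'_apply]; exact h
    simp [pA, this]
  have hpA_ne : ∀ m n, m ≠ n → ∀ a ∈ 𝒜 m, pA n a = 0 := by
    intro m n hmn a ha
    have h := hAinternal.ofBijective_coeLinearMap_of_mem_ne hmn ha
    have : pA' n a = 0 := by rw [hpA'_apply]; exact h
    simp [pA, this]
  have hpA_sum : ∀ a : A, ∑ n ∈ Finset.range (N + 1), pA n a = a := by
    intro a
    set x := eA.symm a with hx
    have hsupp : (DFinsupp.support x) ⊆ Finset.range (N + 1) := by
      intro n hn
      rw [Finset.mem_range]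
      by_contra h
      have hbot := hAbound n (by omega)
      have : x n = 0 := by
        have h2 : ((x n : A)) ∈ (⊥ : Submodule k A) := hbot ▸ (x n).2
        exact Subtype.ext (by simpa using h2)
      simp [DFinsupp.mem_support_iff, this] at hn
    have hof := DirectSum.sum_support_of x
    have h2 : ∑ n ∈ DFinsupp.support x, ((x n : A)) = a := by
      calc ∑ n ∈ DFinsupp.support x, ((x n : A))
          = ∑ n ∈ DFinsupp.support x, DirectSum.coeLinearMap 𝒜
              (DirectSum.of (fun i => 𝒜 i) n (x n)) := by
            refine Finset.sum_congr rfl fun n _ => ?_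
            rw [DirectSum.coeLinearMap_of]
        _ = DirectSum.coeLinearMap 𝒜 x := by rw [← map_sum, hof]
        _ = a := by
            have : eA x = a := by rw [hx]; exact eA.apply_symm_apply a
            exact this
    have h3 : ∀ n ∈ Finset.range (N + 1), n ∉ DFinsupp.support x → pA n a = 0 := by
      intro n _ hn
      rw [DFinsupp.notMem_support_iff] at hn
      have : pA' n a = 0 := by rw [hpA'_apply, ← hx, hn]
      simp [pA, this]
    have h4 : ∀ n, n ∈ DFinsupp.support x → pA n a = (x n : A) := by
      intro n _
      simp [pA, hpA'_apply, ← hx]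
    calc ∑ n ∈ Finset.range (N + 1), pA n a
        = ∑ n ∈ DFinsupp.support x, pA n a := (Finset.sum_subset hsupp h3).symm
      _ = ∑ n ∈ DFinsupp.support x, ((x n : A)) := Finset.sum_congr rfl h4
      _ = a := h2
  -- ## projections for B
  let eB : (DirectSum ℕ fun n => ℬ n) ≃ₗ[k] B :=
    LinearEquiv.ofBijective (DirectSum.coeLinearMap ℬ) hBinternal
  let pB' : (n : ℕ) → (B →ₗ[k] ℬ n) := fun n =>
    (DirectSum.component k ℕ (fun n => ℬ n) n) ∘ₗ eB.symm.toLinearMap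
  let pB : ℕ → (B →ₗ[k] B) := fun n => (ℬ n).subtype ∘ₗ pB' n
  have hpB'_apply : ∀ n b, pB' n b = eB.symm b n := fun n b => rfl
  have hpB_mem : ∀ n b, pB n b ∈ ℬ n := fun n b => (pB' n b).2
  have hpB_same : ∀ n, ∀ b ∈ ℬ n, pB n b = b := by
    intro n b hb
    have h := hBinternal.ofBijective_coeLinearMap_of_mem hb
    have : pB' n b = ⟨b, hb⟩ := by rw [hpB'_apply]; exact h
    simp [pB, this]
  have hpB_ne : ∀ m n, m ≠ n → ∀ b ∈ ℬ m, pB n b = 0 := by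
    intro m n hmn b hb
    have h := hBinternal.ofBijective_coeLinearMap_of_mem_ne hmn hb
    have : pB' n b = 0 := by rw [hpB'_apply]; exact h
    simp [pB, this]
  have hpB_sum : ∀ b : B, ∑ n ∈ Finset.range (N + 1), pB n b = b := by
    intro b
    set x := eB.symm b with hx
    have hsupp : (DFinsupp.support x) ⊆ Finset.range (N + 1) := by
      intro n hn
      rw [Finset.mem_range]
      by_contra h
      have hbot := hBbound n (by omega)
      have : x n = 0 := by
        have h2 : ((x n : B)) ∈ (⊥ : Submodule k B) := hbot ▸ (x n).2
        exact Subtype.ext (by simpa using h2)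
      simp [DFinsupp.mem_support_iff, this] at hn
    have hof := DirectSum.sum_support_of x
    have h2 : ∑ n ∈ DFinsupp.support x, ((x n : B)) = b := by
      calc ∑ n ∈ DFinsupp.support x, ((x n : B))
          = ∑ n ∈ DFinsupp.support x, DirectSum.coeLinearMap ℬ
              (DirectSum.of (fun i => ℬ i) n (x n)) := by
            refine Finset.sum_congr rfl fun n _ => ?_
            rw [DirectSum.coeLinearMap_of]
        _ = DirectSum.coeLinearMap ℬ x := by rw [← map_sum, hof]
        _ = b := by
            have : eB x = b := by rw [hx]; exact eB.apply_symm_apply b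
            exact this
    have h3 : ∀ n ∈ Finset.range (N + 1), n ∉ DFinsupp.support x → pB n b = 0 := by
      intro n _ hn
      rw [DFinsupp.notMem_support_iff] at hn
      have : pB' n b = 0 := by rw [hpB'_apply, ← hx, hn]
      simp [pB, this]
    have h4 : ∀ n, n ∈ DFinsupp.support x → pB n b = (x n : B) := by
      intro n _
      simp [pB, hpB'_apply, ← hx]
    calc ∑ n ∈ Finset.range (N + 1), pB n b
        = ∑ n ∈ DFinsupp.support x, pB n b := (Finset.sum_subset hsupp h3).symm
      _ = ∑ n ∈ DFinsupp.support x, ((x n : B)) := Finset.sum_congr rfl h4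
      _ = b := h2
  -- ## the top of A and coordinates there
  obtain ⟨bA⟩ := (finrank_eq_one_iff (Fin 1)).mp hAtop
  set vA : 𝒜 N := bA 0 with hvA
  set aN : A := (vA : A) with haN
  have haN_mem : aN ∈ 𝒜 N := vA.2
  have haN_ne : aN ≠ 0 := by
    simpa [haN, Submodule.coe_eq_zero] using bA.ne_zero 0
  have hbA_repr : ∀ w : 𝒜 N, (bA.repr w 0) • vA = w := by
    intro w
    have := bA.sum_repr w
    simpa [Fin.sum_univ_one, hvA] using this
  let cA : A →ₗ[k] k := (bA.coord 0) ∘ₗ pA' N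
  have hcA_apply : ∀ a, cA a = bA.repr (pA' N a) 0 := fun a => rfl
  have hcA_top : ∀ a ∈ 𝒜 N, cA a • aN = a := by
    intro a ha
    have h1 : pA' N a = ⟨a, ha⟩ := hAinternal.ofBijective_coeLinearMap_of_mem ha
    have h2 := hbA_repr ⟨a, ha⟩
    have : cA a • vA = ⟨a, ha⟩ := by rw [hcA_apply, h1]; exact h2
    calc cA a • aN = ((cA a • vA : 𝒜 N) : A) := by rw [haN]; norm_cast
      _ = a := by rw [this]
  -- ## the top of B
  obtain ⟨bB⟩ := (finrank_eq_one_iff (Fin 1)).mp hBtop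
  set vB : ℬ N := bB 0 with hvB
  have hbB_repr : ∀ w : ℬ N, (bB.repr w 0) • vB = w := by
    intro w
    have := bB.sum_repr w
    simpa [Fin.sum_univ_one, hvB] using this
  -- pair (vB) aN ≠ 0
  have hvB_pair : pair (vB : B) aN ≠ 0 := by
    obtain ⟨b', hb'mem, hb'⟩ := hndA N aN haN_mem haN_ne
    have h2 := hbB_repr ⟨b', hb'mem⟩
    have h3 : b' = bB.repr ⟨b', hb'mem⟩ 0 • (vB : B) := by
      conv_lhs => rw [show b' = ((⟨b', hb'mem⟩ : ℬ N) : B) from rfl, ← h2]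
      norm_cast
    intro h0
    rw [h3] at hb'
    simp [map_smul, h0] at hb'
  have hpairBN : ∀ b ∈ ℬ N, b ≠ 0 → pair b aN ≠ 0 := by
    intro b hb hbne
    have h2 := hbB_repr ⟨b, hb⟩
    have h3 : b = bB.repr ⟨b, hb⟩ 0 • (vB : B) := by
      conv_lhs => rw [show b = ((⟨b, hb⟩ : ℬ N) : B) from rfl, ← h2]
      norm_cast
    have hc : bB.repr ⟨b, hb⟩ 0 ≠ 0 := by
      intro h0
      rw [h3, h0, zero_smul] at hbne
      exact hbne rfl
    rw [h3]
    simp only [map_smul, LinearMap.smul_apply, smul_eq_mul]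
    exact mul_ne_zero hc hvB_pair
  -- pairing with aN only sees the top component
  have hpair_aN : ∀ b : B, pair b aN = pair (pB N b) aN := by
    intro b
    conv_lhs => rw [← hpB_sum b]
    rw [map_sum]
    simp only [LinearMap.coe_sum, Finset.sum_apply]
    rw [Finset.sum_eq_single N]
    · intro m _ hm
      exact horth m N hm _ (hpB_mem m b) _ haN_mem
    · intro h
      simp at h
  -- πB equals top projection
  have hπB_eq : ∀ b : B, πB b = pB N b := by
    intro b
    conv_lhs => rw [← hpB_sum b]
    rw [map_sum, Finset.sum_eq_single N]
    · exact hπB1 _ (hpB_mem N b)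
    · intro m _ hm
      exact hπB0 m hm _ (hpB_mem m b)
    · intro h
      simp at h
  -- ## S1 : γm y aN = 0 → y = 0
  have hS1 : ∀ y : B, γm y aN = 0 → y = 0 := by
    intro y hy
    by_contra hyne
    obtain ⟨w, hw⟩ := hFrobB.2 y hyne
    have h0 : pair (w * y) aN = 0 := by
      rw [← hγm, hy, map_zero]
    have h1 : pair (pB N (w * y)) aN ≠ 0 := by
      apply hpairBN _ (hpB_mem N _)
      rw [← hπB_eq]
      exact hw
    rw [hpair_aN] at h0
    exact h1 h0
  -- ## S2 : separation within 𝒜 n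
  have hS2 : ∀ n, n ≤ N → ∀ x ∈ 𝒜 n, (∀ z ∈ 𝒜 (N - n), x * z = 0) → x = 0 := by
    intro n hn x hx hxz
    by_contra hxne
    obtain ⟨b, hb⟩ := hFrobA.1 x hxne
    apply hb
    conv_lhs => rw [← hpA_sum b]
    rw [Finset.mul_sum, map_sum]
    refine Finset.sum_eq_zero ?_
    intro q _
    by_cases hq : q = N - n
    · have hz : pA q b ∈ 𝒜 (N - n) := hq ▸ hpA_mem q b
      rw [hxz _ hz, map_zero]
    · have hne : n + q ≠ N := by omega
      exact hπA0 (n + q) hne _ (hAmul n q x hx _ (hpA_mem q b))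
  -- evaluation of gammaMap on pure tensors
  have hgamma_tmul : ∀ (y : B) (x z : A),
      gammaMap k A B γm (y ⊗ₜ[k] x) z = γm y (x * z) := by
    intro y x z
    simp [gammaMap, LinearMap.mul_apply']
  -- ## injectivity
  have hinj : Function.Injective (gammaMap k A B γm) := by
    rw [← LinearMap.ker_eq_bot, LinearMap.ker_eq_bot']
    intro t hT
    have hTz : ∀ z : A, gammaMap k A B γm t z = 0 := by
      intro z
      rw [hT]
      rfl
    -- decomposition of any tensor into graded components
    have hdecomp : ∀ s : B ⊗[k] A,
        s = ∑ m ∈ Finset.range (N + 1), LinearMap.lTensor B (pA m) s := by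
      intro s
      have hid : (∑ m ∈ Finset.range (N + 1), pA m) = LinearMap.id := by
        apply LinearMap.ext
        intro a
        simpa using hpA_sum a
      have hlt : LinearMap.lTensor B (∑ m ∈ Finset.range (N + 1), pA m)
          = ∑ m ∈ Finset.range (N + 1), LinearMap.lTensor B (pA m) :=
        map_sum (LinearMap.lTensorHom B : (A →ₗ[k] A) →ₗ[k] _) _ _
      calc s = LinearMap.lTensor B LinearMap.id s := by rw [LinearMap.lTensor_id]; rfl
        _ = LinearMap.lTensor B (∑ m ∈ Finset.range (N + 1), pA m) s := by rw [hid]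
        _ = ∑ m ∈ Finset.range (N + 1), LinearMap.lTensor B (pA m) s := by
            rw [hlt]
            simp
    have hcomp : ∀ n, LinearMap.lTensor B (pA n) t = 0 := by
      intro n
      induction n using Nat.strong_induction_on with
      | _ n IH =>
        by_cases hngt : N < n
        · have hz : pA n = 0 := by
            apply LinearMap.ext
            intro a
            have hmem := hpA_mem n a
            rw [hAbound n hngt] at hmem
            simpa using hmem
          rw [hz, LinearMap.lTensor_zero]
          rfl
        · push_neg at hngt
          set u := LinearMap.lTensor B (pA n) t with hu
          -- vanishing of high components against z ∈ 𝒜 (N - n)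
          have hhigh : ∀ m, n < m → ∀ z ∈ 𝒜 (N - n), ∀ s : B ⊗[k] A,
              gammaMap k A B γm (LinearMap.lTensor B (pA m) s) z = 0 := by
            intro m hm z hz s
            induction s using TensorProduct.induction_on with
            | zero => simp
            | tmul y x =>
                have hmem : pA m x * z ∈ 𝒜 (m + (N - n)) :=
                  hAmul _ _ _ (hpA_mem m x) _ hz
                have hzero : pA m x * z = 0 := by
                  rw [hAbound (m + (N - n)) (by omega)] at hmem
                  simpa using hmem
                rw [LinearMap.lTensor_tmul, hgamma_tmul, hzero, map_zero]
            | add s1 s2 h1 h2 =>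
                rw [map_add, map_add, LinearMap.add_apply, h1, h2, add_zero]
          -- step 1 : gammaMap u z = 0 for z in complementary degree
          have step1 : ∀ z ∈ 𝒜 (N - n), gammaMap k A B γm u z = 0 := by
            intro z hz
            have hsplit : gammaMap k A B γm t z
                = ∑ m ∈ Finset.range (N + 1),
                    gammaMap k A B γm (LinearMap.lTensor B (pA m) t) z := by
              conv_lhs => rw [hdecomp t]
              rw [map_sum]
              simp
            have hsum0 : ∑ m ∈ Finset.range (N + 1),
                gammaMap k A B γm (LinearMap.lTensor B (pA m) t) z = 0 := by
              rw [← hsplit, hTz]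
            have hsingle : ∑ m ∈ Finset.range (N + 1),
                gammaMap k A B γm (LinearMap.lTensor B (pA m) t) z
                = gammaMap k A B γm u z := by
              refine Finset.sum_eq_single n ?_ ?_
              · intro m _ hmn
                rcases lt_or_gt_of_ne hmn with hlt | hgt
                · rw [IH m hlt]
                  simp
                · exact hhigh m hgt z hz t
              · intro hnmem
                exfalso
                apply hnmem
                rw [Finset.mem_range]
                omega
            rw [← hsingle, hsum0]
          -- step 2 : contraction against top coefficients vanishes
          have step2 : ∀ z ∈ 𝒜 (N - n),
              ((TensorProduct.rid k B).toLinearMap ∘ₗ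
                LinearMap.lTensor B (cA ∘ₗ LinearMap.mulRight k z)) u = 0 := by
            intro z hz
            have key : ∀ s : B ⊗[k] A,
                gammaMap k A B γm (LinearMap.lTensor B (pA n) s) z
                = γm (((TensorProduct.rid k B).toLinearMap ∘ₗ
                    LinearMap.lTensor B (cA ∘ₗ LinearMap.mulRight k z))
                    (LinearMap.lTensor B (pA n) s)) aN := by
              intro s
              induction s using TensorProduct.induction_on with
              | zero => simp
              | tmul y x =>
                  have hmem : pA n x * z ∈ 𝒜 (n + (N - n)) :=
                    hAmul _ _ _ (hpA_mem n x) _ hz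
                  have hNn : n + (N - n) = N := by omega
                  rw [hNn] at hmem
                  have htop : cA (pA n x * z) • aN = pA n x * z := hcA_top _ hmem
                  have hgm : γm y (pA n x * z) = cA (pA n x * z) • γm y aN := by
                    conv_lhs => rw [← htop]
                    rw [map_smul]
                  rw [LinearMap.lTensor_tmul, hgamma_tmul, hgm]
                  simp
              | add s1 s2 h1 h2 =>
                  rw [map_add, map_add, LinearMap.add_apply, h1, h2, map_add,
                    map_add, LinearMap.add_apply]
            have h0 : γm (((TensorProduct.rid k B).toLinearMap ∘ₗ
                LinearMap.lTensor B (cA ∘ₗ LinearMap.mulRight k z)) u) aN = 0 := by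
              rw [hu, ← key t, ← hu]
              exact step1 z hz
            have := hS1 _ h0
            exact this
          -- step 3 : u = 0 by the separation lemma
          refine tensor_eq_zero_of_contractions k B A (𝒜 n) u ?_
            ((fun z => cA ∘ₗ LinearMap.mulRight k z) '' ((𝒜 (N - n) : Set A))) ?_ ?_
          · -- u lies in B ⊗ 𝒜 n
            refine ⟨LinearMap.lTensor B (pA' n) t, ?_⟩
            rw [← LinearMap.comp_apply, ← LinearMap.lTensor_comp]
          · -- separation
            intro p hp hfs
            refine hS2 n hngt p hp ?_
            intro z hz
            have hcz : cA (p * z) = 0 := by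
              have := hfs (cA ∘ₗ LinearMap.mulRight k z) ⟨z, hz, rfl⟩
              simpa using this
            have hmem : p * z ∈ 𝒜 (n + (N - n)) := hAmul _ _ _ hp _ hz
            have hNn : n + (N - n) = N := by omega
            rw [hNn] at hmem
            rw [← hcA_top _ hmem, hcz, zero_smul]
          · -- vanishing of the contractions
            rintro f ⟨z, hz, rfl⟩
            exact step2 z hz
    -- conclude t = 0
    rw [hdecomp t]
    refine Finset.sum_eq_zero ?_
    intro m _
    exact hcomp m
  -- ## dimension count
  have hinjB : Function.Injective pair := by
    rw [← LinearMap.ker_eq_bot, LinearMap.ker_eq_bot']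
    intro b hb0
    by_contra hbne
    have hex : ∃ n, pB n b ≠ 0 := by
      by_contra hall
      push_neg at hall
      apply hbne
      rw [← hpB_sum b]
      exact Finset.sum_eq_zero fun n _ => hall n
    obtain ⟨n, hn⟩ := hex
    obtain ⟨a, hamem, hpa⟩ := hndB n _ (hpB_mem n b) hn
    apply hpa
    have hba : pair b a = pair (pB n b) a := by
      conv_lhs => rw [← hpB_sum b]
      rw [map_sum]
      simp only [LinearMap.coe_sum, Finset.sum_apply]
      refine Finset.sum_eq_single n
        (fun m _ hm => horth m n hm _ (hpB_mem m b) _ hamem) ?_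
      intro hnmem
      have : N < n := by
        rw [Finset.mem_range] at hnmem
        omega
      have hbot : pB n b = 0 := by
        have hmem := hpB_mem n b
        rw [hBbound n this] at hmem
        simpa using hmem
      rw [hbot, map_zero]
      rfl
    rw [← hba, hb0]
    rfl
  have hinjA : Function.Injective pair.flip := by
    rw [← LinearMap.ker_eq_bot, LinearMap.ker_eq_bot']
    intro a ha0
    by_contra hane
    have hex : ∃ n, pA n a ≠ 0 := by
      by_contra hall
      push_neg at hall
      apply hane
      rw [← hpA_sum a]
      exact Finset.sum_eq_zero fun n _ => hall n
    obtain ⟨n, hn⟩ := hex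
    obtain ⟨b, hbmem, hpb⟩ := hndA n _ (hpA_mem n a) hn
    apply hpb
    have hba : pair b a = pair b (pA n a) := by
      conv_lhs => rw [← hpA_sum a]
      rw [map_sum]
      refine Finset.sum_eq_single n
        (fun m _ hm => horth n m (Ne.symm hm) _ hbmem _ (hpA_mem m a)) ?_
      intro hnmem
      have : N < n := by
        rw [Finset.mem_range] at hnmem
        omega
      have hbot : pA n a = 0 := by
        have hmem := hpA_mem n a
        rw [hAbound n this] at hmem
        simpa using hmem
      rw [hbot, map_zero]
    rw [← hba]
    show pair.flip a b = 0
    rw [ha0]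
    rfl
  have hdimBA : Module.finrank k B = Module.finrank k A := by
    have h1 : Module.finrank k B ≤ Module.finrank k A := by
      have := LinearMap.finrank_le_finrank_of_injective hinjB
      rwa [Module.finrank_linearMap, Module.finrank_self, mul_one] at this
    have h2 : Module.finrank k A ≤ Module.finrank k B := by
      have := LinearMap.finrank_le_finrank_of_injective hinjA
      rwa [Module.finrank_linearMap, Module.finrank_self, mul_one] at this
    omega
  have hfr : Module.finrank k (B ⊗[k] A) = Module.finrank k (A →ₗ[k] A) := by
    rw [Module.finrank_tensorProduct, Module.finrank_linearMap, hdimBA]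
  exact ⟨hinj,
    (LinearMap.injective_iff_surjective_of_finrank_eq_finrank hfr).mp hinj⟩


end Stmt9
end

section
/- The family (F_𝐤)_{𝐤 ∈ ℕ^N} is a one-generated Γ-valued filtration of A; that is: (a) F_𝐣 ⊆ F_𝐤 whenever 𝐣 ≤ 𝐤 lie in the same fiber Γ_l; (b) F_{(l,0,…,0)} = A^l for every l (note (l,0,…,0) is the maximal element of Γ_l); (c) F_𝐤 F_{𝐤′} ⊆ F_{𝐤+𝐤′} for all 𝐤, 𝐤′; and moreover for every 𝐤 ∈ Γ_l one has F_𝐤 = ∑ F_{δ_{i_1}} ⋯ F_{δ_{i_l}}, the sum over all tuples (i_1, …, i_l) with δ_{i_1} + ⋯ + δ_{i_l} ≤ 𝐤, where δ_i denotes the i-th standard basis vector of ℕ^N. -/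
/-!
Statement 10: the lexicographic filtration of the quantum symmetric algebra (given by
spans of PBW monomials) is a one-generated `ℕ^N`-valued filtration.
-/

namespace Stmt10

/-- The defining relations `x_l x_k = q_{kl} x_k x_l + Σ_{k<i≤j<l} c_{kl}^{ij} x_i x_j`
for `k < l`. -/
inductive Rel (k : Type*) [Field k] (N : ℕ) (q : Fin N → Fin N → k)
    (c : Fin N → Fin N → Fin N → Fin N → k) :
    FreeAlgebra k (Fin N) → FreeAlgebra k (Fin N) → Prop
  | rel {a b : Fin N} (h : a < b) :
      Rel k N q c (FreeAlgebra.ι k b * FreeAlgebra.ι k a)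
        (q a b • (FreeAlgebra.ι k a * FreeAlgebra.ι k b) +
          ∑ i : Fin N, ∑ j : Fin N,
            (if a < i ∧ i ≤ j ∧ j < b then c a b i j else 0) •
              (FreeAlgebra.ι k i * FreeAlgebra.ι k j))

/-- The algebra `A` (the quantum symmetric algebra). -/
abbrev QSA (k : Type*) [Field k] (N : ℕ) (q : Fin N → Fin N → k)
    (c : Fin N → Fin N → Fin N → Fin N → k) : Type _ :=
  RingQuot (Rel k N q c)

variable (k : Type*) [Field k] (N : ℕ) (q : Fin N → Fin N → k)
  (c : Fin N → Fin N → Fin N → Fin N → k)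

/-- The generators `x_i` of `A`. -/
noncomputable def x (i : Fin N) : QSA k N q c :=
  RingQuot.mkAlgHom k (Rel k N q c) (FreeAlgebra.ι k i)

/-- The ordered PBW monomial `x_v = x_1^{k_1} ⋯ x_N^{k_N}`. -/
noncomputable def xMon (v : Fin N → ℕ) : QSA k N q c :=
  (List.ofFn fun i : Fin N => x k N q c i ^ v i).prod

/-- The total degree `g(v) = Σ_j k_j`. -/
def deg (v : Fin N → ℕ) : ℕ := ∑ i, v i

/-- Strict lexicographic order with earlier coordinates more significant. -/
def lexLt (u v : Fin N → ℕ) : Prop :=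
  ∃ j : Fin N, (∀ i : Fin N, i < j → u i = v i) ∧ u j < v j

/-- Lexicographic order (reflexive closure of `lexLt`). -/
def lexLe (u v : Fin N → ℕ) : Prop := lexLt N u v ∨ u = v

/-- The filtration subspace
`F_v = span { x_{w} : w in the same fiber as v and w ≤ v }`. -/
noncomputable def F (v : Fin N → ℕ) : Submodule k (QSA k N q c) :=
  Submodule.span k
    (xMon k N q c '' {w : Fin N → ℕ | deg N w = deg N v ∧ lexLe N w v})

/-- The degree-`l` component `A^l`, the span of the PBW monomials of total degree
`l`. -/
noncomputable def Adeg (l : ℕ) : Submodule k (QSA k N q c) :=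
  Submodule.span k (xMon k N q c '' {v : Fin N → ℕ | deg N v = l})


/-! ### Auxiliary lemmas -/

theorem lexLt_trans {N : ℕ} {u v w : Fin N → ℕ} (h1 : lexLt N u v) (h2 : lexLt N v w) :
    lexLt N u w :=
  show toLex u < toLex w from lt_trans (show toLex u < toLex v from h1) h2

theorem lexLe_refl {N : ℕ} (v : Fin N → ℕ) : lexLe N v v := Or.inr rfl

theorem lexLe_trans {N : ℕ} {u v w : Fin N → ℕ} (h1 : lexLe N u v) (h2 : lexLe N v w) :
    lexLe N u w := by
  rcases h1 with h1 | rfl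
  · rcases h2 with h2 | rfl
    · exact Or.inl (lexLt_trans h1 h2)
    · exact Or.inl h1
  · exact h2

theorem lexLt_add_right {N : ℕ} {u v : Fin N → ℕ} (w : Fin N → ℕ) (h : lexLt N u v) :
    lexLt N (u + w) (v + w) := by
  obtain ⟨j, hj, hjlt⟩ := h
  exact ⟨j, fun i hi => by simp [hj i hi], by simpa using Nat.add_lt_add_right hjlt (w j)⟩

theorem lexLt_add_left {N : ℕ} {u v : Fin N → ℕ} (w : Fin N → ℕ) (h : lexLt N u v) :
    lexLt N (w + u) (w + v) := by
  obtain ⟨j, hj, hjlt⟩ := h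
  exact ⟨j, fun i hi => by simp [hj i hi], by simpa using Nat.add_lt_add_left hjlt (w j)⟩

theorem lexLe_add {N : ℕ} {u v u' v' : Fin N → ℕ} (h : lexLe N u v) (h' : lexLe N u' v') :
    lexLe N (u + u') (v + v') := by
  rcases h with h | rfl
  · rcases h' with h' | rfl
    · exact Or.inl (lexLt_trans (lexLt_add_right u' h) (lexLt_add_left v h'))
    · exact Or.inl (lexLt_add_right u' h)
  · rcases h' with h' | rfl
    · exact Or.inl (lexLt_add_left u h')
    · exact Or.inr rfl

theorem deg_add {N : ℕ} (u v : Fin N → ℕ) : deg N (u + v) = deg N u + deg N v := by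
  simp [deg, Finset.sum_add_distrib]

theorem deg_single {N : ℕ} (i : Fin N) : deg N (Pi.single i 1) = 1 := by
  simp [deg, Pi.single_apply]

theorem F_mono {u v : Fin N → ℕ} (hdeg : deg N u = deg N v) (hle : lexLe N u v) :
    F k N q c u ≤ F k N q c v := by
  apply Submodule.span_mono
  apply Set.image_mono
  rintro w ⟨hw1, hw2⟩
  exact ⟨hw1.trans hdeg, lexLe_trans hw2 hle⟩

theorem xMon_mem_F (v : Fin N → ℕ) : xMon k N q c v ∈ F k N q c v :=
  Submodule.subset_span ⟨v, ⟨rfl, lexLe_refl v⟩, rfl⟩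

/-- The exponent-count vector of a word. -/
def cnt {N : ℕ} (w : List (Fin N)) : Fin N → ℕ :=
  (w.map fun i => Pi.single i 1).sum

/-- The product of the generators indexed by a word. -/
noncomputable def P (w : List (Fin N)) : QSA k N q c := (w.map (x k N q c)).prod

theorem cnt_nil {N : ℕ} : cnt ([] : List (Fin N)) = 0 := rfl

theorem cnt_cons {N : ℕ} (i : Fin N) (w : List (Fin N)) :
    cnt (i :: w) = Pi.single i 1 + cnt w := by simp [cnt]

theorem cnt_append {N : ℕ} (w1 w2 : List (Fin N)) :
    cnt (w1 ++ w2) = cnt w1 + cnt w2 := by simp [cnt]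

theorem deg_cnt {N : ℕ} (w : List (Fin N)) : deg N (cnt w) = w.length := by
  induction w with
  | nil => simp [cnt_nil, deg]
  | cons i t ih => rw [cnt_cons, deg_add, deg_single, ih, List.length_cons]; omega

theorem cnt_eq_zero_of_not_mem {N : ℕ} {j : Fin N} {w : List (Fin N)} (h : j ∉ w) :
    cnt w j = 0 := by
  induction w with
  | nil => rfl
  | cons i t ih =>
    rw [cnt_cons, Pi.add_apply, Pi.single_apply, if_neg (by rintro rfl; exact h List.mem_cons_self),
      ih (fun ht => h (List.mem_cons_of_mem i ht))]

theorem P_nil : P k N q c [] = 1 := rfl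

theorem P_cons (i : Fin N) (w : List (Fin N)) :
    P k N q c (i :: w) = x k N q c i * P k N q c w := by simp [P]

theorem xMon_zero : xMon k N q c 0 = 1 := by
  simp [xMon, List.ofFn_const]

theorem prod_ofFn_head {M : Type*} [Monoid M] {n : ℕ} (f : Fin n → M) (i : Fin n)
    (h1 : ∀ j, j < i → f j = 1) :
    (List.ofFn f).prod = f i * ((List.ofFn f).drop ((i : ℕ) + 1)).prod := by
  have hlen : (i : ℕ) < (List.ofFn f).length := by simp [i.isLt]
  conv_lhs => rw [← List.prod_take_mul_prod_drop (List.ofFn f) i]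
  have htake : ((List.ofFn f).take i).prod = 1 := by
    apply List.prod_eq_one
    intro y hy
    obtain ⟨m, hm, rfl⟩ := List.getElem_of_mem hy
    have hmi : m < (i : ℕ) := lt_of_lt_of_le hm (by simp)
    rw [List.getElem_take, List.getElem_ofFn]
    exact h1 _ (by simpa [Fin.lt_def] using hmi)
  rw [htake, one_mul, List.drop_eq_getElem_cons hlen, List.prod_cons, List.getElem_ofFn]

theorem prod_ofFn_eq_mul {M : Type*} [Monoid M] {n : ℕ} (f g : Fin n → M) (i : Fin n) (a : M)
    (h1 : ∀ j, j < i → f j = 1) (h1' : ∀ j, j < i → g j = 1) (hi : g i = a * f i)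
    (hgt : ∀ j, i < j → g j = f j) :
    (List.ofFn g).prod = a * (List.ofFn f).prod := by
  rw [prod_ofFn_head f i h1, prod_ofFn_head g i h1', hi]
  have hdrop : (List.ofFn g).drop ((i : ℕ) + 1) = (List.ofFn f).drop ((i : ℕ) + 1) := by
    apply List.ext_getElem (by simp)
    intro m hm1 hm2
    simp only [List.getElem_drop, List.getElem_ofFn]
    exact hgt _ (by simp only [Fin.lt_def]; omega)
  rw [hdrop, mul_assoc]

theorem x_mul_xMon (i : Fin N) (u : Fin N → ℕ) (h : ∀ j, j < i → u j = 0) :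
    x k N q c i * xMon k N q c u = xMon k N q c (Pi.single i 1 + u) := by
  symm
  simp only [xMon]
  refine prod_ofFn_eq_mul (fun j => x k N q c j ^ u j)
    (fun j => x k N q c j ^ (Pi.single i 1 + u : Fin N → ℕ) j) i (x k N q c i) ?_ ?_ ?_ ?_
  · intro j hj; show x k N q c j ^ u j = 1
    rw [h j hj, pow_zero]
  · intro j hj; show x k N q c j ^ (Pi.single i 1 + u : Fin N → ℕ) j = 1
    rw [Pi.add_apply, Pi.single_apply, if_neg (ne_of_lt hj), h j hj, pow_zero]
  · show x k N q c i ^ (Pi.single i 1 + u : Fin N → ℕ) i = x k N q c i * x k N q c i ^ u i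
    rw [Pi.add_apply, Pi.single_eq_same, add_comm, pow_succ']
  · intro j hj; show x k N q c j ^ (Pi.single i 1 + u : Fin N → ℕ) j = x k N q c j ^ u j
    rw [Pi.add_apply, Pi.single_apply, if_neg (ne_of_gt hj), zero_add]

theorem P_sorted (w : List (Fin N)) (hs : w.Pairwise (· ≤ ·)) :
    P k N q c w = xMon k N q c (cnt w) := by
  induction w with
  | nil => rw [P_nil, cnt_nil, xMon_zero]
  | cons i t ih =>
    rw [List.pairwise_cons] at hs
    have h0 : ∀ j, j < i → cnt t j = 0 := fun j hj =>
      cnt_eq_zero_of_not_mem (fun hm => absurd (hs.1 j hm) (not_le.mpr hj))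
    rw [P_cons, ih hs.2, x_mul_xMon k N q c i _ h0, cnt_cons]

theorem x_rel {a b : Fin N} (h : a < b) :
    x k N q c b * x k N q c a =
      q a b • (x k N q c a * x k N q c b) +
        ∑ i : Fin N, ∑ j : Fin N,
          (if a < i ∧ i ≤ j ∧ j < b then c a b i j else 0) •
            (x k N q c i * x k N q c j) := by
  have h1 := RingQuot.mkAlgHom_rel k (Rel.rel (q := q) (c := c) h)
  simp only [map_add, map_mul, map_smul, map_sum] at h1
  simp only [x]
  exact h1

theorem sorted_or_desc {N : ℕ} : ∀ w : List (Fin N), w.Pairwise (· ≤ ·) ∨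
    ∃ (w1 : List (Fin N)) (a b : Fin N) (w2 : List (Fin N)), w = w1 ++ b :: a :: w2 ∧ a < b
  | [] => Or.inl List.Pairwise.nil
  | [i] => Or.inl (List.pairwise_singleton _ i)
  | i :: j :: t => by
    rcases le_or_gt i j with hij | hij
    · rcases sorted_or_desc (j :: t) with hs | ⟨w1, a, b, w2, heq, hab⟩
      · left
        rw [List.pairwise_cons]
        refine ⟨?_, hs⟩
        intro b hb
        rcases List.mem_cons.mp hb with rfl | hb
        · exact hij
        · exact hij.trans ((List.pairwise_cons.mp hs).1 b hb)
      · exact Or.inr ⟨i :: w1, a, b, w2, by rw [List.cons_append, ← heq], hab⟩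
    · exact Or.inr ⟨[], j, i, t, rfl, hij⟩

/-- The number of inversions of a word. -/
def inv {N : ℕ} : List (Fin N) → ℕ
  | [] => 0
  | a :: t => t.countP (fun b => decide (b < a)) + inv t

theorem inv_swap {N : ℕ} {a b : Fin N} (h : a < b) (w : List (Fin N)) :
    inv (a :: b :: w) < inv (b :: a :: w) := by
  simp only [inv, List.countP_cons]
  have h1 : (decide (b < a)) = false := by simp [not_lt.mpr h.le]
  have h2 : (decide (a < b)) = true := by simp [h]
  rw [h1, h2]
  simp only [Bool.false_eq_true, eq_self_iff_true, if_true, if_false]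
  omega

theorem inv_append_lt {N : ℕ} : ∀ (w1 : List (Fin N)) {L1 L2 : List (Fin N)}, L1.Perm L2 →
    inv L1 < inv L2 → inv (w1 ++ L1) < inv (w1 ++ L2)
  | [], _, _, _, h => h
  | h :: t, L1, L2, hp, hlt => by
    simp only [List.cons_append, inv]
    exact Nat.add_lt_add_of_le_of_lt
      (Nat.le_of_eq (List.Perm.countP_eq (fun b => decide (b < h)) (hp.append_left t)))
      (inv_append_lt t hp hlt)

/-- The straightening lemma: every word-product lies in the filtration piece of its
count vector. -/
theorem P_mem_F (w : List (Fin N)) : P k N q c w ∈ F k N q c (cnt w) := by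
  have wf : WellFounded (fun w' w : List (Fin N) =>
      Prod.Lex (· < ·) ((· < ·) : ℕ → ℕ → Prop)
        (toLex (cnt w'), inv w') (toLex (cnt w), inv w)) :=
    InvImage.wf (fun w => (toLex (cnt w), inv w))
      (WellFounded.prod_lex Function.Lex.wellFoundedLT.wf Nat.lt_wfRel.wf)
  refine wf.induction
    (C := fun w => P k N q c w ∈ F k N q c (cnt w)) w ?_
  clear w
  intro w IH
  rcases sorted_or_desc w with hs | ⟨w1, a, b, w2, rfl, hab⟩
  · rw [P_sorted k N q c w hs]
    exact xMon_mem_F k N q c (cnt w)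
  · have expand : P k N q c (w1 ++ b :: a :: w2)
        = q a b • P k N q c (w1 ++ a :: b :: w2)
          + ∑ i : Fin N, ∑ j : Fin N,
              (if a < i ∧ i ≤ j ∧ j < b then c a b i j else 0) •
                P k N q c (w1 ++ i :: j :: w2) := by
      simp only [P, List.map_append, List.map_cons, List.prod_append, List.prod_cons]
      rw [show x k N q c b * (x k N q c a * (w2.map (x k N q c)).prod)
            = (x k N q c b * x k N q c a) * (w2.map (x k N q c)).prod from
          (mul_assoc _ _ _).symm,
        x_rel k N q c hab]
      simp only [add_mul, mul_add, smul_mul_assoc, mul_smul_comm, Finset.sum_mul,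
        Finset.mul_sum, mul_assoc]
    rw [expand]
    apply Submodule.add_mem
    · apply Submodule.smul_mem
      have hcnt : cnt (w1 ++ a :: b :: w2) = cnt (w1 ++ b :: a :: w2) := by
        simp only [cnt_append, cnt_cons]
        abel
      have hrel : Prod.Lex (fun x1 x2 => x1 < x2) ((fun x1 x2 => x1 < x2) : ℕ → ℕ → Prop)
          (toLex (cnt (w1 ++ a :: b :: w2)), inv (w1 ++ a :: b :: w2))
          (toLex (cnt (w1 ++ b :: a :: w2)), inv (w1 ++ b :: a :: w2)) := by
        rw [hcnt]
        exact Prod.Lex.right _ (inv_append_lt w1 (List.Perm.swap b a w2) (inv_swap hab w2))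
      have hmem : P k N q c (w1 ++ a :: b :: w2) ∈ F k N q c (cnt (w1 ++ a :: b :: w2)) :=
        IH (w1 ++ a :: b :: w2) hrel
      rwa [hcnt] at hmem
    · apply Submodule.sum_mem
      intro i _
      apply Submodule.sum_mem
      intro j _
      by_cases hc : a < i ∧ i ≤ j ∧ j < b
      · rw [if_pos hc]
        apply Submodule.smul_mem
        have hlex : lexLt N (cnt (w1 ++ i :: j :: w2)) (cnt (w1 ++ b :: a :: w2)) := by
          refine ⟨a, fun m hm => ?_, ?_⟩
          · have hmi : m ≠ i := ne_of_lt (lt_trans hm hc.1)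
            have hmj : m ≠ j := ne_of_lt (lt_trans hm (lt_of_lt_of_le hc.1 hc.2.1))
            have hma : m ≠ a := ne_of_lt hm
            have hmb : m ≠ b := ne_of_lt (lt_trans hm hab)
            simp only [cnt_append, cnt_cons, Pi.add_apply, Pi.single_apply,
              if_neg hmi, if_neg hmj, if_neg hma, if_neg hmb]
          · have hai : a ≠ i := ne_of_lt hc.1
            have haj : a ≠ j := ne_of_lt (lt_of_lt_of_le hc.1 hc.2.1)
            have hab' : a ≠ b := ne_of_lt hab
            simp only [cnt_append, cnt_cons, Pi.add_apply, Pi.single_apply,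
              if_neg hai, if_neg haj, if_neg hab', if_pos rfl, if_true]
            omega
        have hmem := IH (w1 ++ i :: j :: w2) (Prod.Lex.left _ _ hlex)
        refine F_mono k N q c ?_ (Or.inl hlex) hmem
        rw [deg_cnt, deg_cnt]
        simp
      · rw [if_neg hc, zero_smul]
        exact Submodule.zero_mem _

/-- The canonical sorted word of a vector. -/
def word {N : ℕ} (v : Fin N → ℕ) : List (Fin N) :=
  (List.ofFn fun i => List.replicate (v i) i).flatten

theorem cnt_word {N : ℕ} (v : Fin N → ℕ) : cnt (word v) = v := by
  have hs : ∀ i : Fin N, (v i) • (Pi.single i 1 : Fin N → ℕ) = Pi.single i (v i) := by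
    intro i
    rw [← Pi.single_smul, smul_eq_mul, mul_one]
  simp only [cnt, word, List.map_flatten, List.sum_flatten, List.map_ofFn, Function.comp_def,
    List.map_replicate, List.sum_replicate, List.sum_ofFn, hs, Finset.univ_sum_single]

theorem P_word (v : Fin N → ℕ) : P k N q c (word v) = xMon k N q c v := by
  simp only [P, word, List.map_flatten, List.prod_flatten, List.map_ofFn, Function.comp_def,
    List.map_replicate, List.prod_replicate, xMon]

theorem length_word {N : ℕ} (v : Fin N → ℕ) : (word v).length = deg N v := by
  rw [← deg_cnt (word v), cnt_word]

theorem F_mul_le (v w : Fin N → ℕ) : F k N q c v * F k N q c w ≤ F k N q c (v + w) := by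
  rw [F, F, Submodule.span_mul_span, Submodule.span_le]
  rintro z hz
  rw [Set.mem_mul] at hz
  obtain ⟨s, ⟨u, ⟨hu1, hu2⟩, rfl⟩, t, ⟨u', ⟨hu'1, hu'2⟩, rfl⟩, rfl⟩ := hz
  have h1 : xMon k N q c u * xMon k N q c u' = P k N q c (word u ++ word u') := by
    rw [P, List.map_append, List.prod_append, ← P, ← P, P_word, P_word]
  have h2 : P k N q c (word u ++ word u') ∈ F k N q c (u + u') := by
    have := P_mem_F k N q c (word u ++ word u')
    rwa [cnt_append, cnt_word, cnt_word] at this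
  have h3 : F k N q c (u + u') ≤ F k N q c (v + w) := by
    refine F_mono k N q c ?_ (lexLe_add hu2 hu'2)
    rw [deg_add, deg_add, hu1, hu'1]
  exact h3 (h1 ▸ h2)

theorem prod_F_le : ∀ L : List (Fin N → ℕ),
    (L.map (F k N q c)).prod ≤ F k N q c L.sum
  | [] => by
    simp only [List.map_nil, List.prod_nil, List.sum_nil]
    rw [Submodule.one_le]
    exact xMon_zero k N q c ▸ xMon_mem_F k N q c 0
  | u :: L => by
    simp only [List.map_cons, List.prod_cons, List.sum_cons]
    calc F k N q c u * (L.map (F k N q c)).prod ≤ F k N q c u * F k N q c L.sum :=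
          mul_le_mul' le_rfl (prod_F_le L)
      _ ≤ F k N q c (u + L.sum) := F_mul_le k N q c u L.sum

theorem prod_mem_listProd : ∀ (n : ℕ) (g : Fin n → QSA k N q c)
    (G : Fin n → Submodule k (QSA k N q c)), (∀ a, g a ∈ G a) →
    (List.ofFn g).prod ∈ (List.ofFn G).prod
  | 0, g, G, h => by
    simp only [List.ofFn_zero, List.prod_nil]
    exact Submodule.one_le.mp le_rfl
  | n + 1, g, G, h => by
    simp only [List.ofFn_succ, List.prod_cons]
    exact Submodule.mul_mem_mul (h 0) (prod_mem_listProd n _ _ (fun a => h a.succ))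

theorem sum_single_get {N : ℕ} : ∀ L : List (Fin N),
    ∑ a : Fin L.length, Pi.single (L.get a) 1 = cnt L
  | [] => by simp [cnt_nil]
  | i :: t => by
    have h : ∑ a : Fin (t.length + 1), Pi.single ((i :: t).get a) 1 = cnt (i :: t) := by
      rw [Fin.sum_univ_succ, cnt_cons, ← sum_single_get t]
      rfl
    exact h

theorem x_mem_F_single (j : Fin N) : x k N q c j ∈ F k N q c (Pi.single j 1) := by
  have h1 : P k N q c [j] = x k N q c j := by simp [P]
  have h2 : cnt [j] = Pi.single j 1 := by simp [cnt]
  have := P_sorted k N q c [j] (List.pairwise_singleton _ j)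
  rw [h1, h2] at this
  rw [this]
  exact xMon_mem_F k N q c _

theorem ofFn_cast {α : Type*} {n m : ℕ} (h : n = m) (f : Fin m → α) :
    (List.ofFn fun a : Fin n => f (Fin.cast h a)) = List.ofFn f := by
  apply List.ext_getElem (by simp [h])
  intro i h1 h2
  simp only [List.getElem_ofFn]
  rfl

/-- Assume `N ≥ 1`, the `q_{kl}` (for `k < l`) are nonzero, and the
ordered monomials `x_v` form a `k`-basis of `A` (the PBW property).  Then
`(F_v)_{v ∈ ℕ^N}` is a one-generated `Γ`-valued filtration of `A`:
(a) `F_u ⊆ F_v` for `u ≤ v` in the same fiber; (b) `F_{(l,0,…,0)} = A^l`;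
(c) `F_v F_{w} ⊆ F_{v+w}`; and (d) `F_v` is the sum of the products
`F_{δ_{i_1}} ⋯ F_{δ_{i_l}}` over all tuples with `δ_{i_1} + ⋯ + δ_{i_l} ≤ v`,
where `l = g(v)` and `δ_i` are the standard basis vectors. -/
theorem filtration_one_generated
    (hN : 0 < N)
    (hq : ∀ a b : Fin N, a < b → q a b ≠ 0)
    (hPBW : LinearIndependent k (xMon k N q c))
    (hspan : Submodule.span k (Set.range (xMon k N q c)) = ⊤) :
    (∀ u v : Fin N → ℕ, deg N u = deg N v → lexLe N u v →
      F k N q c u ≤ F k N q c v) ∧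
    (∀ l : ℕ, F k N q c (fun i => if i = (⟨0, hN⟩ : Fin N) then l else 0)
      = Adeg k N q c l) ∧
    (∀ v w : Fin N → ℕ, ∀ a ∈ F k N q c v, ∀ b ∈ F k N q c w,
      a * b ∈ F k N q c (v + w)) ∧
    (∀ v : Fin N → ℕ,
      F k N q c v = ⨆ (m : Fin (deg N v) → Fin N)
        (_ : lexLe N (∑ a : Fin (deg N v), Pi.single (m a) 1) v),
          ((List.ofFn fun a : Fin (deg N v) => F k N q c (Pi.single (m a) 1)).prod)) := by
  refine ⟨fun u v hd hl => F_mono k N q c hd hl, ?_,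
    fun v w a ha b hb => F_mul_le k N q c v w (Submodule.mul_mem_mul ha hb), ?_⟩
  · -- part (b)
    intro l
    set z0 : Fin N := ⟨0, hN⟩ with hz0
    have hv0 : deg N (fun i => if i = z0 then l else 0) = l := by
      simp [deg, Finset.sum_ite_eq']
    have hmax : ∀ w : Fin N → ℕ, deg N w = l →
        lexLe N w (fun i => if i = z0 then l else 0) := by
      intro w hw
      by_cases hwv : w = fun i => if i = z0 then l else 0
      · exact Or.inr hwv
      · left
        refine ⟨z0, fun i hi => absurd hi (by simp [Fin.lt_def, hz0]), ?_⟩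
        simp only [if_pos rfl]
        rcases Nat.lt_or_ge (w z0) l with h | h
        · exact h
        · exfalso
          apply hwv
          have hle : w z0 ≤ l := hw ▸
            Finset.single_le_sum (fun i _ => Nat.zero_le (w i)) (Finset.mem_univ z0)
          have hz : w z0 = l := le_antisymm hle h
          funext i
          by_cases hi : i = z0
          · rw [hi, if_pos rfl, ← hz]
          · rw [if_neg hi]
            have hkey := Finset.add_sum_erase Finset.univ w (Finset.mem_univ z0)
            have hsum : ∑ j, w j = l := hw
            have h0 : ∑ j ∈ Finset.univ.erase z0, w j = 0 := by omega
            exact Finset.sum_eq_zero_iff.mp h0 i (Finset.mem_erase.mpr ⟨hi, Finset.mem_univ i⟩)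
    rw [F, Adeg]
    congr 1
    ext z
    simp only [Set.mem_image, Set.mem_setOf_eq, hv0]
    constructor
    · rintro ⟨w, ⟨h1, _⟩, h3⟩
      exact ⟨w, h1, h3⟩
    · rintro ⟨w, h1, h3⟩
      exact ⟨w, ⟨h1, hmax w h1⟩, h3⟩
  · -- part (d)
    intro v
    apply le_antisymm
    · rw [F, Submodule.span_le]
      rintro z ⟨u, ⟨hdeg, hle⟩, rfl⟩
      have hlen : (word u).length = deg N v := by rw [length_word, hdeg]
      set m : Fin (deg N v) → Fin N := fun a => (word u).get (Fin.cast hlen.symm a) with hm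
      have hsum : ∑ a : Fin (deg N v), Pi.single (m a) 1 = u := by
        have e1 : ∑ a : Fin (deg N v), (Pi.single (m a) (1 : ℕ) : Fin N → ℕ)
            = ∑ b : Fin (word u).length, (Pi.single ((word u).get b) (1 : ℕ) : Fin N → ℕ) :=
          Fintype.sum_equiv (finCongr hlen.symm)
            (fun a : Fin (deg N v) => (Pi.single (m a) 1 : Fin N → ℕ))
            (fun b : Fin (word u).length => (Pi.single ((word u).get b) 1 : Fin N → ℕ))
            (fun a => by rw [hm, finCongr_apply])
        rw [e1, sum_single_get, cnt_word]
      have hcond : lexLe N (∑ a : Fin (deg N v), Pi.single (m a) 1) v := by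
        rw [hsum]; exact hle
      have hof : (List.ofFn fun a : Fin (deg N v) => x k N q c (m a))
          = List.map (x k N q c) (word u) := by
        apply List.ext_getElem (by simp [hlen])
        intro i h1 h2
        simp only [List.getElem_ofFn, List.getElem_map]
        rfl
      have hxm : xMon k N q c u = (List.ofFn fun a : Fin (deg N v) => x k N q c (m a)).prod := by
        rw [hof, ← P, P_word]
      rw [SetLike.mem_coe, hxm]
      exact Submodule.mem_iSup_of_mem m (Submodule.mem_iSup_of_mem hcond
        (prod_mem_listProd k N q c (deg N v) _ _ (fun a => x_mem_F_single k N q c (m a))))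
    · apply iSup_le
      intro m
      apply iSup_le
      intro hm
      have h1 : (List.ofFn fun a : Fin (deg N v) => F k N q c (Pi.single (m a) 1))
          = ((List.ofFn fun a : Fin (deg N v) => (Pi.single (m a) 1 : Fin N → ℕ)).map
              (F k N q c)) := by
        rw [List.map_ofFn]
        rfl
      rw [h1]
      refine le_trans (prod_F_le k N q c _) ?_
      rw [List.sum_ofFn]
      have hdeg : deg N (∑ a : Fin (deg N v), Pi.single (m a) (1 : ℕ)) = deg N v := by
        have hcomm : deg N (∑ a : Fin (deg N v), Pi.single (m a) (1 : ℕ))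
            = ∑ a : Fin (deg N v), deg N (Pi.single (m a) (1 : ℕ)) := by
          simp only [deg, Finset.sum_apply]
          rw [Finset.sum_comm]
        rw [hcomm]
        simp [deg_single]
      exact F_mono k N q c hdeg hm

end Stmt10
end
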